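/- arXiv:2510.02400 — 4 statements merged into one kernel-verified Lean document; each statement's English description precedes it below -/
import Mathlib

section
/- Let k ≥ 3 and let G be a connected k-regular graph of order n and diameter 2 that is triangle-free and irreducible, and let D be the distance matrix of the bipartite double cover B(G). Let j ∈ ℝ^V be the all-ones vector. Then the vector e₁ = (j, j) ∈ ℝ^{V ⊕ V} satisfies D·e₁ = 5n·e₁, and the vector f₁ = (j, -j) satisfies D·f₁ = (4k - n - 4)·f₁. -/
open SimpleGraph

/-- The bipartite double cover of a graph `G`, on vertex set `V ⊕ V`. -/
def bipartiteDoubleCover {V : Type*} (G : SimpleGraph V) : SimpleGraph (V ⊕ V) where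
  Adj x y :=
    match x, y with
    | Sum.inl u, Sum.inr v => G.Adj u v
    | Sum.inr u, Sum.inl v => G.Adj u v
    | _, _ => False
  symm := by
    constructor
    rintro (u | u) (v | v) h
    · exact h.elim
    · exact h.symm
    · exact h.symm
    · exact h.elim
  loopless := by
    constructor
    rintro (u | u) h
    · exact h
    · exact h

/-- The distance matrix of a graph `H`, over the reals. -/
noncomputable def distMatrix {W : Type*} (H : SimpleGraph W) : Matrix W W ℝ :=
  Matrix.of fun x y => (H.dist x y : ℝ)

set_option linter.unusedSectionVars false
namespace BDCAux

open Sum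

variable {V : Type*}

/-- side of a vertex of the double cover -/
def side : V ⊕ V → ℕ := Sum.elim (fun _ => 0) (fun _ => 1)

lemma side_step {G : SimpleGraph V} {x y : V ⊕ V}
    (h : (_root_.bipartiteDoubleCover G).Adj x y) : side x + side y = 1 := by
  rcases x with u | u <;> rcases y with v | v
  · exact h.elim
  · rfl
  · rfl
  · exact h.elim

lemma walk_parity {G : SimpleGraph V} {x y : V ⊕ V}
    (p : (_root_.bipartiteDoubleCover G).Walk x y) :
    (p.length + side x + side y) % 2 = 0 := by
  induction p with
  | nil =>
    rename_i z
    rcases z with a | a <;> simp [side]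
  | cons h q ih =>
    have hs := side_step h
    simp only [SimpleGraph.Walk.length_cons]
    omega

lemma walk_two {W : Type*} {H : SimpleGraph W} {x y : W} (p : H.Walk x y)
    (hp : p.length = 2) : ∃ w, H.Adj x w ∧ H.Adj w y := by
  refine ⟨p.getVert 1, ?_, ?_⟩
  · have := p.adj_getVert_succ (i := 0) (by omega)
    simpa [SimpleGraph.Walk.getVert_zero] using this
  · have h2 : p.getVert 2 = y := by rw [← hp]; exact p.getVert_length
    have := p.adj_getVert_succ (i := 1) (by omega)
    rwa [h2] at this

lemma walk_three {W : Type*} {H : SimpleGraph W} {x y : W} (p : H.Walk x y)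
    (hp : p.length = 3) : ∃ a b, H.Adj x a ∧ H.Adj a b ∧ H.Adj b y := by
  refine ⟨p.getVert 1, p.getVert 2, ?_, ?_, ?_⟩
  · have := p.adj_getVert_succ (i := 0) (by omega)
    simpa [SimpleGraph.Walk.getVert_zero] using this
  · exact p.adj_getVert_succ (i := 1) (by omega)
  · have h3 : p.getVert 3 = y := by rw [← hp]; exact p.getVert_length
    have := p.adj_getVert_succ (i := 2) (by omega)
    rwa [h3] at this


section GLemmas

variable [Fintype V] {G : SimpleGraph V} [DecidableRel G.Adj] {k : ℕ}

lemma exists_common (hconn : G.Connected) (hdiam : G.diam = 2) {u v : V}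
    (hne : u ≠ v) (hna : ¬ G.Adj u v) : ∃ m, G.Adj u m ∧ G.Adj m v := by
  have het : G.ediam ≠ ⊤ := by
    intro h
    rw [SimpleGraph.diam, h] at hdiam
    simp at hdiam
  have h2 : G.dist u v ≤ 2 := hdiam ▸ SimpleGraph.dist_le_diam het
  have h0 : G.dist u v ≠ 0 := Nat.pos_iff_ne_zero.mp (hconn.pos_dist_of_ne hne)
  have h1 : G.dist u v ≠ 1 := fun h => hna (SimpleGraph.dist_eq_one_iff_adj.mp h)
  obtain ⟨p, hp⟩ := (hconn u v).exists_walk_length_eq_dist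
  exact walk_two p (by omega)

lemma exists_path3 (hconn : G.Connected) (hreg : G.IsRegularOfDegree k)
    (hdiam : G.diam = 2)
    (hirr : ∀ u v : V, G.neighborSet u = G.neighborSet v → u = v) {u v : V}
    (hne : u ≠ v) (hna : ¬ G.Adj u v) :
    ∃ a b, G.Adj u a ∧ G.Adj a b ∧ G.Adj b v := by
  classical
  have hsub : ¬ G.neighborFinset u ⊆ G.neighborFinset v := by
    intro hs
    have hcard : (G.neighborFinset v).card ≤ (G.neighborFinset u).card := by
      rw [SimpleGraph.card_neighborFinset_eq_degree, SimpleGraph.card_neighborFinset_eq_degree,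
        hreg u, hreg v]
    have heq : G.neighborFinset u = G.neighborFinset v :=
      Finset.eq_of_subset_of_card_le hs hcard
    refine hne (hirr u v ?_)
    have := congrArg (fun s : Finset V => (s : Set V)) heq
    simpa [SimpleGraph.neighborFinset] using this
  obtain ⟨a, ha, hav⟩ := Finset.not_subset.mp hsub
  have hua : G.Adj u a := (SimpleGraph.mem_neighborFinset G u a).mp ha
  have hnav : ¬ G.Adj a v := by
    intro h
    exact hav ((SimpleGraph.mem_neighborFinset G v a).mpr h.symm)
  have hanev : a ≠ v := by
    rintro rfl
    exact hna hua
  obtain ⟨b, hab, hbv⟩ := exists_common hconn hdiam hanev hnav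
  exact ⟨a, b, hua, hab, hbv⟩

lemma exists_path4 (hconn : G.Connected) (hreg : G.IsRegularOfDegree k) (hk : 3 ≤ k)
    (hdiam : G.diam = 2)
    (htf : ∀ u v : V, G.Adj u v → ∀ x : V, ¬(G.Adj u x ∧ G.Adj v x))
    (hirr : ∀ u v : V, G.neighborSet u = G.neighborSet v → u = v) {u v : V}
    (hadj : G.Adj u v) :
    ∃ a b c, G.Adj u a ∧ G.Adj a b ∧ G.Adj b c ∧ G.Adj c v := by
  classical
  have h2 : 1 < (G.neighborFinset u).card := by
    rw [SimpleGraph.card_neighborFinset_eq_degree, hreg u]; omega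
  obtain ⟨a, ha, hanev⟩ := Finset.exists_mem_ne h2 v
  have hua : G.Adj u a := (SimpleGraph.mem_neighborFinset G u a).mp ha
  have hnav : ¬ G.Adj a v := fun h => htf u v hadj a ⟨hua, h.symm⟩
  obtain ⟨b, c, hab, hbc, hcv⟩ := exists_path3 hconn hreg hdiam hirr hanev hnav
  exact ⟨a, b, c, hua, hab, hbc, hcv⟩


-- Distances in the bipartite double cover
section Dist

lemma adj_lr {u v : V} (h : G.Adj u v) :
    (_root_.bipartiteDoubleCover G).Adj (inl u) (inr v) := h

lemma adj_rl {u v : V} (h : G.Adj u v) :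
    (_root_.bipartiteDoubleCover G).Adj (inr u) (inl v) := h

lemma not_adj_ll {u v : V} : ¬ (_root_.bipartiteDoubleCover G).Adj (inl u) (inl v) := fun h => h

lemma dist_lr_adj {u v : V} (hadj : G.Adj u v) :
    (_root_.bipartiteDoubleCover G).dist (inl u) (inr v) = 1 :=
  SimpleGraph.dist_eq_one_iff_adj.mpr hadj

lemma dist_ll_two (hconn : G.Connected) (hdiam : G.diam = 2) {u v : V}
    (hne : u ≠ v) (hna : ¬ G.Adj u v) :
    (_root_.bipartiteDoubleCover G).dist (inl u) (inl v) = 2 := by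
  obtain ⟨m, h1, h2⟩ := exists_common hconn hdiam hne hna
  let p : (_root_.bipartiteDoubleCover G).Walk (inl u) (inl v) :=
    SimpleGraph.Walk.cons (adj_lr h1)
      (SimpleGraph.Walk.cons (adj_rl h2)
        SimpleGraph.Walk.nil)
  have hle : (_root_.bipartiteDoubleCover G).dist (inl u) (inl v) ≤ 2 := SimpleGraph.dist_le p
  have h0 : (_root_.bipartiteDoubleCover G).dist (inl u) (inl v) ≠ 0 := by
    rw [SimpleGraph.dist_ne_zero_iff_ne_and_reachable]
    exact ⟨by simp [hne], ⟨p⟩⟩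
  have h1' : (_root_.bipartiteDoubleCover G).dist (inl u) (inl v) ≠ 1 := by
    intro h
    exact not_adj_ll (SimpleGraph.dist_eq_one_iff_adj.mp h)
  omega

lemma dist_lr_three (hconn : G.Connected) (hreg : G.IsRegularOfDegree k)
    (hdiam : G.diam = 2)
    (hirr : ∀ u v : V, G.neighborSet u = G.neighborSet v → u = v) {u v : V}
    (hne : u ≠ v) (hna : ¬ G.Adj u v) :
    (_root_.bipartiteDoubleCover G).dist (inl u) (inr v) = 3 := by
  obtain ⟨a, b, h1, h2, h3⟩ := exists_path3 hconn hreg hdiam hirr hne hna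
  let p : (_root_.bipartiteDoubleCover G).Walk (inl u) (inr v) :=
    SimpleGraph.Walk.cons (adj_lr h1)
      (SimpleGraph.Walk.cons (adj_rl h2)
        (SimpleGraph.Walk.cons (adj_lr h3)
          SimpleGraph.Walk.nil))
  have hle : (_root_.bipartiteDoubleCover G).dist (inl u) (inr v) ≤ 3 := SimpleGraph.dist_le p
  have h0 : (_root_.bipartiteDoubleCover G).dist (inl u) (inr v) ≠ 0 := by
    rw [SimpleGraph.dist_ne_zero_iff_ne_and_reachable]
    exact ⟨by simp, ⟨p⟩⟩
  have h1' : (_root_.bipartiteDoubleCover G).dist (inl u) (inr v) ≠ 1 := by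
    intro h
    exact hna ((SimpleGraph.dist_eq_one_iff_adj (G := _root_.bipartiteDoubleCover G)).mp h)
  have h2' : (_root_.bipartiteDoubleCover G).dist (inl u) (inr v) ≠ 2 := by
    intro h
    obtain ⟨q, hq⟩ := SimpleGraph.exists_walk_of_dist_ne_zero h0
    have := walk_parity q
    rw [hq, h] at this
    simp [side] at this
  omega

lemma dist_ll_four (hconn : G.Connected) (hreg : G.IsRegularOfDegree k) (hk : 3 ≤ k)
    (hdiam : G.diam = 2)
    (htf : ∀ u v : V, G.Adj u v → ∀ x : V, ¬(G.Adj u x ∧ G.Adj v x))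
    (hirr : ∀ u v : V, G.neighborSet u = G.neighborSet v → u = v) {u v : V}
    (hadj : G.Adj u v) :
    (_root_.bipartiteDoubleCover G).dist (inl u) (inl v) = 4 := by
  obtain ⟨a, b, c, h1, h2, h3, h4⟩ := exists_path4 hconn hreg hk hdiam htf hirr hadj
  let p : (_root_.bipartiteDoubleCover G).Walk (inl u) (inl v) :=
    SimpleGraph.Walk.cons (adj_lr h1)
      (SimpleGraph.Walk.cons (adj_rl h2)
        (SimpleGraph.Walk.cons (adj_lr h3)
          (SimpleGraph.Walk.cons (adj_rl h4)
            SimpleGraph.Walk.nil)))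
  have hle : (_root_.bipartiteDoubleCover G).dist (inl u) (inl v) ≤ 4 := SimpleGraph.dist_le p
  have h0 : (_root_.bipartiteDoubleCover G).dist (inl u) (inl v) ≠ 0 := by
    rw [SimpleGraph.dist_ne_zero_iff_ne_and_reachable]
    exact ⟨by simp [hadj.ne], ⟨p⟩⟩
  have h1' : (_root_.bipartiteDoubleCover G).dist (inl u) (inl v) ≠ 1 := by
    intro h
    exact not_adj_ll (SimpleGraph.dist_eq_one_iff_adj.mp h)
  have h2' : (_root_.bipartiteDoubleCover G).dist (inl u) (inl v) ≠ 2 := by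
    intro h
    obtain ⟨q, hq⟩ := SimpleGraph.exists_walk_of_dist_ne_zero h0
    obtain ⟨w, hw1, hw2⟩ := walk_two q (by omega)
    rcases w with m | m
    · exact hw1
    · exact htf u v hadj m ⟨hw1, ((hw2 : G.Adj m v)).symm⟩
  have h3' : (_root_.bipartiteDoubleCover G).dist (inl u) (inl v) ≠ 3 := by
    intro h
    obtain ⟨q, hq⟩ := SimpleGraph.exists_walk_of_dist_ne_zero h0
    have := walk_parity q
    rw [hq, h] at this
    simp [side] at this
  omega

lemma dist_lr_five (hconn : G.Connected) (hreg : G.IsRegularOfDegree k) (hk : 3 ≤ k)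
    (hdiam : G.diam = 2)
    (htf : ∀ u v : V, G.Adj u v → ∀ x : V, ¬(G.Adj u x ∧ G.Adj v x))
    (hirr : ∀ u v : V, G.neighborSet u = G.neighborSet v → u = v) (u : V) :
    (_root_.bipartiteDoubleCover G).dist (inl u) (inr u) = 5 := by
  classical
  have hpos : 0 < (G.neighborFinset u).card := by
    rw [SimpleGraph.card_neighborFinset_eq_degree, hreg u]; omega
  obtain ⟨a, ha⟩ := Finset.card_pos.mp hpos
  have hua : G.Adj u a := (SimpleGraph.mem_neighborFinset G u a).mp ha
  obtain ⟨x, y, z, h1, h2, h3, h4⟩ := exists_path4 hconn hreg hk hdiam htf hirr hua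
  let p : (_root_.bipartiteDoubleCover G).Walk (inl u) (inr u) :=
    SimpleGraph.Walk.cons (adj_lr h1)
      (SimpleGraph.Walk.cons (adj_rl h2)
        (SimpleGraph.Walk.cons (adj_lr h3)
          (SimpleGraph.Walk.cons (adj_rl h4)
            (SimpleGraph.Walk.cons (adj_lr hua.symm)
              SimpleGraph.Walk.nil))))
  have hle : (_root_.bipartiteDoubleCover G).dist (inl u) (inr u) ≤ 5 := SimpleGraph.dist_le p
  have h0 : (_root_.bipartiteDoubleCover G).dist (inl u) (inr u) ≠ 0 := by
    rw [SimpleGraph.dist_ne_zero_iff_ne_and_reachable]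
    exact ⟨by simp, ⟨p⟩⟩
  have h1' : (_root_.bipartiteDoubleCover G).dist (inl u) (inr u) ≠ 1 := by
    intro h
    exact G.irrefl ((SimpleGraph.dist_eq_one_iff_adj (G := _root_.bipartiteDoubleCover G)).mp h)
  have hpar : ∀ m, (_root_.bipartiteDoubleCover G).dist (inl u) (inr u) = m → m % 2 = 1 := by
    intro m hm
    obtain ⟨q, hq⟩ := SimpleGraph.exists_walk_of_dist_ne_zero h0
    have := walk_parity q
    rw [hq, hm] at this
    simp [side] at this
    omega
  have h2' : (_root_.bipartiteDoubleCover G).dist (inl u) (inr u) ≠ 2 := fun h => by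
    have := hpar 2 h; omega
  have h4' : (_root_.bipartiteDoubleCover G).dist (inl u) (inr u) ≠ 4 := fun h => by
    have := hpar 4 h; omega
  have h3' : (_root_.bipartiteDoubleCover G).dist (inl u) (inr u) ≠ 3 := by
    intro h
    obtain ⟨q, hq⟩ := SimpleGraph.exists_walk_of_dist_ne_zero h0
    obtain ⟨w1, w2, hw1, hw2, hw3⟩ := walk_three q (by omega)
    rcases w1 with m | m
    · exact hw1
    · rcases w2 with m' | m'
      · exact htf u m (hw1 : G.Adj u m) m' ⟨((hw3 : G.Adj m' u)).symm, (hw2 : G.Adj m m')⟩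
      · exact hw2
  omega


/-- Swapping the two copies is a graph homomorphism of the double cover. -/
def swapHom : _root_.bipartiteDoubleCover G →g _root_.bipartiteDoubleCover G where
  toFun := Sum.swap
  map_rel' := by
    rintro (u | u) (v | v) h
    · exact h
    · exact h
    · exact h
    · exact h

lemma dist_swap_le (x y : V ⊕ V) :
    (_root_.bipartiteDoubleCover G).dist (Sum.swap x) (Sum.swap y) ≤
      (_root_.bipartiteDoubleCover G).dist x y := by
  by_cases hr : (_root_.bipartiteDoubleCover G).Reachable x y
  · obtain ⟨p, hp⟩ := hr.exists_walk_length_eq_dist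
    calc (_root_.bipartiteDoubleCover G).dist (Sum.swap x) (Sum.swap y)
        ≤ (p.map (swapHom (G := G))).length := SimpleGraph.dist_le _
      _ = p.length := by simp
      _ = _ := hp
  · rw [SimpleGraph.dist_eq_zero_of_not_reachable hr,
      SimpleGraph.dist_eq_zero_of_not_reachable]
    intro h
    apply hr
    have := h.map (swapHom (G := G))
    have h2 : ∀ z : V ⊕ V, swapHom (G := G) (Sum.swap z) = z := fun z => Sum.swap_swap z
    rwa [h2, h2] at this

lemma dist_swap (x y : V ⊕ V) :
    (_root_.bipartiteDoubleCover G).dist (Sum.swap x) (Sum.swap y) =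
      (_root_.bipartiteDoubleCover G).dist x y := by
  refine le_antisymm (dist_swap_le x y) ?_
  have := dist_swap_le (G := G) (Sum.swap x) (Sum.swap y)
  simpa using this

lemma dist_rr (u v : V) :
    (_root_.bipartiteDoubleCover G).dist (inr u) (inr v) =
      (_root_.bipartiteDoubleCover G).dist (inl u) (inl v) :=
  dist_swap (inl u) (inl v)

lemma dist_rl (u v : V) :
    (_root_.bipartiteDoubleCover G).dist (inr u) (inl v) =
      (_root_.bipartiteDoubleCover G).dist (inl u) (inr v) :=
  dist_swap (inl u) (inr v)

end Dist

section Sum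

lemma sum_classify [DecidableEq V] (hreg : G.IsRegularOfDegree k) (u : V)
    (f : V → ℝ) (c0 c1 c2 : ℝ) (h0 : f u = c0)
    (h1 : ∀ v, G.Adj u v → f v = c1)
    (h2 : ∀ v, v ≠ u → ¬ G.Adj u v → f v = c2) :
    ∑ v, f v = c0 + (k : ℝ) * c1 + ((Fintype.card V - 1 - k : ℕ) : ℝ) * c2 := by
  have hsub : G.neighborFinset u ⊆ Finset.univ.erase u := by
    intro v hv
    exact Finset.mem_erase.mpr
      ⟨((SimpleGraph.mem_neighborFinset G u v).mp hv).ne', Finset.mem_univ v⟩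
  have hcardN : (G.neighborFinset u).card = k := by
    rw [SimpleGraph.card_neighborFinset_eq_degree, hreg u]
  have hcardE : (Finset.univ.erase u).card = Fintype.card V - 1 := by
    rw [Finset.card_erase_of_mem (Finset.mem_univ u), Finset.card_univ]
  have e1 : ∑ v ∈ G.neighborFinset u, f v = (k : ℝ) * c1 := by
    rw [Finset.sum_congr rfl
      (fun v hv => h1 v ((SimpleGraph.mem_neighborFinset G u v).mp hv)),
      Finset.sum_const, hcardN, nsmul_eq_mul]
  have e2 : ∑ v ∈ Finset.univ.erase u \ G.neighborFinset u, f v =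
      ((Fintype.card V - 1 - k : ℕ) : ℝ) * c2 := by
    rw [Finset.sum_congr rfl (fun v hv => ?_), Finset.sum_const,
      Finset.card_sdiff_of_subset hsub, hcardN, hcardE, nsmul_eq_mul]
    obtain ⟨hv1, hv2⟩ := Finset.mem_sdiff.mp hv
    exact h2 v (Finset.mem_erase.mp hv1).1
      (fun h => hv2 ((SimpleGraph.mem_neighborFinset G u v).mpr h))
  have split : ∑ v, f v = f u + ∑ v ∈ Finset.univ.erase u, f v :=
    (Finset.add_sum_erase _ f (Finset.mem_univ u)).symm
  rw [split, ← Finset.sum_sdiff hsub, e1, e2, h0]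
  ring

end Sum

end GLemmas

end BDCAux

open BDCAux Sum

theorem stmt4 {V : Type*} [Fintype V] (G : SimpleGraph V)
    [DecidableRel G.Adj] (k : ℕ) (hk : 3 ≤ k)
    (hconn : G.Connected) (hreg : G.IsRegularOfDegree k) (hdiam : G.diam = 2)
    (htf : ∀ u v : V, G.Adj u v → ∀ x : V, ¬(G.Adj u x ∧ G.Adj v x))
    (hirr : ∀ u v : V, G.neighborSet u = G.neighborSet v → u = v) :
    (distMatrix (_root_.bipartiteDoubleCover G)).mulVec
        (Sum.elim (fun _ : V => (1 : ℝ)) (fun _ : V => (1 : ℝ))) =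
      (5 * (Fintype.card V : ℝ)) •
        Sum.elim (fun _ : V => (1 : ℝ)) (fun _ : V => (1 : ℝ)) ∧
    (distMatrix (_root_.bipartiteDoubleCover G)).mulVec
        (Sum.elim (fun _ : V => (1 : ℝ)) (fun _ : V => (-1 : ℝ))) =
      (4 * (k : ℝ) - (Fintype.card V : ℝ) - 4) •
        Sum.elim (fun _ : V => (1 : ℝ)) (fun _ : V => (-1 : ℝ)) := by
  classical
  haveI : Nonempty V := hconn.nonempty
  obtain ⟨u0⟩ := ‹Nonempty V›
  set n := Fintype.card V with hn
  have hkn : k + 1 ≤ n := by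
    have hsub : insert u0 (G.neighborFinset u0) ⊆ Finset.univ := Finset.subset_univ _
    have hcard := Finset.card_le_card hsub
    rw [Finset.card_insert_of_notMem (by simp), Finset.card_univ,
      SimpleGraph.card_neighborFinset_eq_degree, hreg u0] at hcard
    omega
  have hcast : ((n - 1 - k : ℕ) : ℝ) = (n : ℝ) - 1 - (k : ℝ) := by
    rw [Nat.cast_sub (by omega : k ≤ n - 1), Nat.cast_sub (by omega : 1 ≤ n), Nat.cast_one]
  have S_ll : ∀ u : V, ∑ v, ((_root_.bipartiteDoubleCover G).dist (inl u) (inl v) : ℝ) =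
      0 + (k : ℝ) * 4 + ((n - 1 - k : ℕ) : ℝ) * 2 := fun u =>
    sum_classify hreg u _ 0 4 2 (by simp [SimpleGraph.dist_self])
      (fun v h => by rw [dist_ll_four hconn hreg hk hdiam htf hirr h]; norm_num)
      (fun v hv h => by rw [dist_ll_two hconn hdiam (Ne.symm hv) h]; norm_num)
  have S_lr : ∀ u : V, ∑ v, ((_root_.bipartiteDoubleCover G).dist (inl u) (inr v) : ℝ) =
      5 + (k : ℝ) * 1 + ((n - 1 - k : ℕ) : ℝ) * 3 := fun u =>
    sum_classify hreg u _ 5 1 3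
      (by rw [dist_lr_five hconn hreg hk hdiam htf hirr u]; norm_num)
      (fun v h => by rw [dist_lr_adj h]; norm_num)
      (fun v hv h => by rw [dist_lr_three hconn hreg hdiam hirr (Ne.symm hv) h]; norm_num)
  have S_rl : ∀ u : V, ∑ v, ((_root_.bipartiteDoubleCover G).dist (inr u) (inl v) : ℝ) =
      5 + (k : ℝ) * 1 + ((n - 1 - k : ℕ) : ℝ) * 3 := fun u => by
    simp only [dist_rl]
    exact S_lr u
  have S_rr : ∀ u : V, ∑ v, ((_root_.bipartiteDoubleCover G).dist (inr u) (inr v) : ℝ) =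
      0 + (k : ℝ) * 4 + ((n - 1 - k : ℕ) : ℝ) * 2 := fun u => by
    simp only [dist_rr]
    exact S_ll u
  constructor
  · funext x
    rcases x with u | u
    · simp only [Matrix.mulVec, dotProduct, distMatrix, Matrix.of_apply,
        Fintype.sum_sum_type, Sum.elim_inl, Sum.elim_inr, mul_one, Pi.smul_apply,
        smul_eq_mul]
      rw [S_ll u, S_lr u, hcast]
      ring
    · simp only [Matrix.mulVec, dotProduct, distMatrix, Matrix.of_apply,
        Fintype.sum_sum_type, Sum.elim_inl, Sum.elim_inr, mul_one, Pi.smul_apply,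
        smul_eq_mul]
      rw [S_rl u, S_rr u, hcast]
      ring
  · funext x
    rcases x with u | u
    · simp only [Matrix.mulVec, dotProduct, distMatrix, Matrix.of_apply,
        Fintype.sum_sum_type, Sum.elim_inl, Sum.elim_inr, mul_one, mul_neg_one,
        Finset.sum_neg_distrib, Pi.smul_apply, smul_eq_mul]
      rw [S_ll u, S_lr u, hcast]
      ring
    · simp only [Matrix.mulVec, dotProduct, distMatrix, Matrix.of_apply,
        Fintype.sum_sum_type, Sum.elim_inl, Sum.elim_inr, mul_one, mul_neg_one,
        Finset.sum_neg_distrib, Pi.smul_apply, smul_eq_mul]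
      rw [S_rl u, S_rr u, hcast]
      ring
end

section
/- Let k ≥ 3 and let G be a connected k-regular graph of order n and diameter 2 in which every pair of adjacent vertices has at least one common neighbor, with adjacency matrix A. Let D be the distance matrix of the bipartite double cover B(G), with rows and columns indexed by V ⊕ V. Then D = -2·M + 2·X + 3·Y - 2·I_{2n}, where M = fromBlocks 0 A A 0, X = fromBlocks J_n 0 0 J_n, Y = fromBlocks 0 J_n J_n 0, J_n is the n×n all-ones matrix, and I_{2n} is the identity matrix of size 2n. -/
open SimpleGraph

section Aux

variable {V : Type*} (G : SimpleGraph V)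

/-- The side of a vertex of the double cover, as an element of `ZMod 2`. -/
private def bdcSide : V ⊕ V → ZMod 2 := Sum.elim (fun _ => 0) (fun _ => 1)

private lemma bdc_walk_parity {x y : V ⊕ V} (p : (_root_.bipartiteDoubleCover G).Walk x y) :
    (p.length : ZMod 2) = bdcSide y - bdcSide x := by
  induction p with
  | nil => simp
  | @cons a b c h p ih =>
    have hside : bdcSide b = bdcSide a + 1 := by
      rcases a with a | a <;> rcases b with b | b <;>
        simp only [_root_.bipartiteDoubleCover] at h <;>
        first
          | exact h.elim
          | (simp only [bdcSide, Sum.elim_inl, Sum.elim_inr]; decide)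
    rw [Walk.length_cons, Nat.cast_add, ih, hside, Nat.cast_one]
    ring

private lemma bdc_dist_parity {x y : V ⊕ V}
    (h : (_root_.bipartiteDoubleCover G).Reachable x y) :
    (((_root_.bipartiteDoubleCover G).dist x y : ℕ) : ZMod 2) = bdcSide y - bdcSide x := by
  obtain ⟨p, hp⟩ := h.exists_walk_length_eq_dist
  rw [← hp]
  exact bdc_walk_parity G p

end Aux

theorem stmt9 {V : Type*} [Fintype V] [DecidableEq V] (G : SimpleGraph V)
    [DecidableRel G.Adj] (k : ℕ) (hk : 3 ≤ k)
    (hconn : G.Connected) (hreg : G.IsRegularOfDegree k) (hdiam : G.diam = 2)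
    (hcn : ∀ u v : V, G.Adj u v → ∃ x : V, G.Adj u x ∧ G.Adj v x) :
    distMatrix (_root_.bipartiteDoubleCover G) =
      (-2 : ℝ) • Matrix.fromBlocks 0 (G.adjMatrix ℝ) (G.adjMatrix ℝ) 0
        + (2 : ℝ) • Matrix.fromBlocks (Matrix.of fun _ _ => (1 : ℝ)) 0 0
            (Matrix.of fun _ _ => (1 : ℝ))
        + (3 : ℝ) • Matrix.fromBlocks 0 (Matrix.of fun _ _ => (1 : ℝ))
            (Matrix.of fun _ _ => (1 : ℝ)) 0
        - (2 : ℝ) • (1 : Matrix (V ⊕ V) (V ⊕ V) ℝ) := by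
  set B := _root_.bipartiteDoubleCover G with hB
  -- every vertex has a neighbor
  have hnbr : ∀ u : V, ∃ w : V, G.Adj u w := by
    intro u
    have hd : (G.neighborFinset u).card = k := hreg u
    have : 0 < (G.neighborFinset u).card := by omega
    obtain ⟨w, hw⟩ := Finset.card_pos.mp this
    exact ⟨w, (G.mem_neighborFinset u w).mp hw⟩
  -- between distinct vertices there is a path of length exactly 2
  have htwo : ∀ u v : V, u ≠ v → ∃ w : V, G.Adj u w ∧ G.Adj w v := by
    intro u v huv
    by_cases hadj : G.Adj u v
    · obtain ⟨x, hx1, hx2⟩ := hcn u v hadj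
      exact ⟨x, hx1, hx2.symm⟩
    · have hd : G.dist u v = 2 := by
        have h1 : G.dist u v ≤ 2 := by
          rw [← hdiam]
          exact dist_le_diam (ediam_ne_top_of_diam_ne_zero (by omega))
        have h2 : 0 < G.dist u v := hconn.pos_dist_of_ne huv
        have h3 : G.dist u v ≠ 1 := fun h => hadj (dist_eq_one_iff_adj.mp h)
        omega
      obtain ⟨p, hp⟩ := (hconn u v).exists_walk_length_eq_dist
      rw [hd] at hp
      refine ⟨p.getVert 1, ?_, ?_⟩
      · have := p.adj_getVert_succ (i := 0) (by omega)
        simpa using this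
      · have := p.adj_getVert_succ (i := 1) (by omega)
        rw [show (1 : ℕ) + 1 = p.length by omega] at this
        simpa using this
  -- between any two vertices there is a walk of length exactly 3
  have hthree : ∀ u v : V, ∃ w x : V, G.Adj u w ∧ G.Adj w x ∧ G.Adj x v := by
    intro u v
    by_cases huv : u = v
    · subst huv
      obtain ⟨w, hw⟩ := hnbr u
      obtain ⟨x, hx1, hx2⟩ := hcn u w hw
      exact ⟨w, x, hw, hx2, hx1.symm⟩
    · obtain ⟨w, hw1, hw2⟩ := htwo u v huv
      obtain ⟨x, hx1, hx2⟩ := hcn w v hw2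
      exact ⟨w, x, hw1, hx1, hx2.symm⟩
  -- distances in the double cover
  have hll : ∀ u v : V, u ≠ v → B.dist (Sum.inl u) (Sum.inl v) = 2 := by
    intro u v huv
    obtain ⟨w, hw1, hw2⟩ := htwo u v huv
    let p : B.Walk (Sum.inl u) (Sum.inl v) :=
      Walk.cons (show B.Adj (Sum.inl u) (Sum.inr w) from hw1)
        (Walk.cons (show B.Adj (Sum.inr w) (Sum.inl v) from hw2) Walk.nil)
    have hle : B.dist (Sum.inl u) (Sum.inl v) ≤ 2 := dist_le p
    have hreach : B.Reachable (Sum.inl u) (Sum.inl v) := ⟨p⟩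
    have hpos : 0 < B.dist (Sum.inl u) (Sum.inl v) :=
      hreach.pos_dist_of_ne (by simp [huv])
    have hpar := bdc_dist_parity G hreach
    simp only [bdcSide, Sum.elim_inl, sub_self] at hpar
    interval_cases h : B.dist (Sum.inl u) (Sum.inl v)
    · exact absurd hpar (by decide)
    · rfl
  have hrr : ∀ u v : V, u ≠ v → B.dist (Sum.inr u) (Sum.inr v) = 2 := by
    intro u v huv
    obtain ⟨w, hw1, hw2⟩ := htwo u v huv
    let p : B.Walk (Sum.inr u) (Sum.inr v) :=
      Walk.cons (show B.Adj (Sum.inr u) (Sum.inl w) from hw1)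
        (Walk.cons (show B.Adj (Sum.inl w) (Sum.inr v) from hw2) Walk.nil)
    have hle : B.dist (Sum.inr u) (Sum.inr v) ≤ 2 := dist_le p
    have hreach : B.Reachable (Sum.inr u) (Sum.inr v) := ⟨p⟩
    have hpos : 0 < B.dist (Sum.inr u) (Sum.inr v) :=
      hreach.pos_dist_of_ne (by simp [huv])
    have hpar := bdc_dist_parity G hreach
    simp only [bdcSide, Sum.elim_inr, sub_self] at hpar
    interval_cases h : B.dist (Sum.inr u) (Sum.inr v)
    · exact absurd hpar (by decide)
    · rfl
  have hlr : ∀ u v : V, B.dist (Sum.inl u) (Sum.inr v) = if G.Adj u v then 1 else 3 := by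
    intro u v
    by_cases hadj : G.Adj u v
    · rw [if_pos hadj]
      exact dist_eq_one_iff_adj.mpr (show B.Adj (Sum.inl u) (Sum.inr v) from hadj)
    · rw [if_neg hadj]
      obtain ⟨w, x, h1, h2, h3⟩ := hthree u v
      let p : B.Walk (Sum.inl u) (Sum.inr v) :=
        Walk.cons (show B.Adj (Sum.inl u) (Sum.inr w) from h1)
          (Walk.cons (show B.Adj (Sum.inr w) (Sum.inl x) from h2)
            (Walk.cons (show B.Adj (Sum.inl x) (Sum.inr v) from h3) Walk.nil))
      have hle : B.dist (Sum.inl u) (Sum.inr v) ≤ 3 := dist_le p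
      have hreach : B.Reachable (Sum.inl u) (Sum.inr v) := ⟨p⟩
      have hpos : 0 < B.dist (Sum.inl u) (Sum.inr v) :=
        hreach.pos_dist_of_ne (by simp)
      have hne1 : B.dist (Sum.inl u) (Sum.inr v) ≠ 1 := by
        intro h
        have hb : B.Adj (Sum.inl u) (Sum.inr v) := dist_eq_one_iff_adj.mp h
        exact hadj hb
      have hpar := bdc_dist_parity G hreach
      simp only [bdcSide, Sum.elim_inl, Sum.elim_inr, sub_zero] at hpar
      interval_cases h : B.dist (Sum.inl u) (Sum.inr v)
      · omega
      · exact absurd hpar (by decide)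
      · rfl
  have hrl : ∀ u v : V, B.dist (Sum.inr u) (Sum.inl v) = if G.Adj u v then 1 else 3 := by
    intro u v
    rw [SimpleGraph.dist_comm, hlr v u]
    simp only [adj_comm]
  -- now compare the matrices entrywise
  ext x y
  rcases x with u | u <;> rcases y with v | v <;>
    simp only [distMatrix, Matrix.of_apply, Matrix.add_apply, Matrix.sub_apply,
      Matrix.smul_apply, Matrix.fromBlocks_apply₁₁, Matrix.fromBlocks_apply₁₂,
      Matrix.fromBlocks_apply₂₁, Matrix.fromBlocks_apply₂₂, Matrix.zero_apply,
      Matrix.one_apply, adjMatrix_apply, smul_eq_mul, mul_zero, mul_one,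
      Sum.inl.injEq, Sum.inr.injEq, reduceCtorEq] at *
  · by_cases huv : u = v
    · subst huv; simp [SimpleGraph.dist_self]
    · rw [hll u v huv, if_neg huv]; norm_num
  · rw [hlr u v]
    by_cases hadj : G.Adj u v <;> simp [hadj] <;> norm_num
  · rw [hrl u v]
    by_cases hadj : G.Adj u v <;> simp [hadj] <;> norm_num
  · by_cases huv : u = v
    · subst huv; simp [SimpleGraph.dist_self]
    · rw [hrr u v huv, if_neg huv]; norm_num
end

section
/- Let k ≥ 3 and let G be a connected k-regular graph of order n and diameter 2 in which every pair of adjacent vertices has at least one common neighbor, with adjacency matrix A, and let D be the distance matrix of the bipartite double cover B(G). Suppose w ∈ ℝ^V satisfies A·w = λ·w and ∑_{v ∈ V} w(v) = 0. Then the vector e = (w, w) ∈ ℝ^{V ⊕ V} satisfies D·e = (-2λ - 2)·e, and the vector f = (w, -w) satisfies D·f = (2λ - 2)·f. -/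
open SimpleGraph

set_option linter.unusedSectionVars false

lemma bdc_adj {V : Type*} (G : SimpleGraph V) (u v : V) :
    (_root_.bipartiteDoubleCover G).Adj (Sum.inl u) (Sum.inr v) ↔ G.Adj u v := Iff.rfl

lemma bdc_adj' {V : Type*} (G : SimpleGraph V) (u v : V) :
    (_root_.bipartiteDoubleCover G).Adj (Sum.inr u) (Sum.inl v) ↔ G.Adj u v := Iff.rfl

lemma bdc_parity {V : Type*} (G : SimpleGraph V) {x y : V ⊕ V}
    (p : (_root_.bipartiteDoubleCover G).Walk x y) :
    p.length % 2 = 0 ↔ x.isLeft = y.isLeft := by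
  induction p with
  | nil => simp
  | @cons a b c h q ih =>
    have hadj : a.isLeft = !b.isLeft := by
      rcases a with u | u <;> rcases b with v | v <;> simp_all [_root_.bipartiteDoubleCover]
    rw [SimpleGraph.Walk.length_cons]
    have h2 : (q.length + 1) % 2 = 0 ↔ ¬(q.length % 2 = 0) := by omega
    rw [h2, ih, hadj]
    cases b.isLeft <;> cases c.isLeft <;> simp

section Dist
variable {V : Type*} [Fintype V] (G : SimpleGraph V) [DecidableRel G.Adj]

lemma step2 (hconn : G.Connected) (hdiam : G.diam = 2)
    (hcn : ∀ u v : V, G.Adj u v → ∃ x : V, G.Adj u x ∧ G.Adj v x)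
    {u v : V} (hne : u ≠ v) : ∃ x, G.Adj u x ∧ G.Adj x v := by
  by_cases h : G.Adj u v
  · obtain ⟨x, h1, h2⟩ := hcn u v h
    exact ⟨x, h1, h2.symm⟩
  · have hle : G.dist u v ≤ 2 := by
      rw [← hdiam]
      exact SimpleGraph.dist_le_diam (G.ediam_ne_top_of_diam_ne_zero (by omega))
    have h0 : G.dist u v ≠ 0 := by
      simp [hconn.dist_eq_zero_iff, hne]
    have h1 : G.dist u v ≠ 1 := by
      simp [SimpleGraph.dist_eq_one_iff_adj, h]
    have hd : G.dist u v = 2 := by omega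
    obtain ⟨p, hp⟩ := (hconn u v).exists_walk_length_eq_dist
    rw [hd] at hp
    cases p with
    | nil => simp at hp
    | @cons _ x _ ha q =>
      cases q with
      | nil => simp at hp
      | @cons _ y _ hb r =>
        simp [SimpleGraph.Walk.length_cons] at hp
        have : y = v := hp.eq
        subst this
        exact ⟨x, ha, hb⟩

lemma dist_cross (hconn : G.Connected) (hdiam : G.diam = 2) (k : ℕ) (hk : 3 ≤ k)
    (hreg : G.IsRegularOfDegree k)
    (hcn : ∀ u v : V, G.Adj u v → ∃ x : V, G.Adj u x ∧ G.Adj v x)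
    (u v : V) :
    (_root_.bipartiteDoubleCover G).dist (Sum.inl u) (Sum.inr v) =
      if G.Adj u v then 1 else 3 := by
  by_cases h : G.Adj u v
  · simp only [h, if_true]
    exact SimpleGraph.dist_eq_one_iff_adj.mpr h
  · simp only [h, if_false]
    -- construct a walk of length 3
    obtain ⟨x, hux, hxv⟩ : ∃ x, G.Adj u x ∧ G.Adj x v := by
      by_cases huv : u = v
      · subst huv
        have : 0 < G.degree u := by rw [hreg u]; omega
        obtain ⟨x, hx⟩ := (G.degree_pos_iff_exists_adj u).mp this
        exact ⟨x, hx, hx.symm⟩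
      · exact step2 G hconn hdiam hcn huv
    obtain ⟨y, huy, hxy⟩ := hcn u x hux
    let p : (_root_.bipartiteDoubleCover G).Walk (Sum.inl u) (Sum.inr v) :=
      SimpleGraph.Walk.cons ((bdc_adj G u y).mpr huy)
        (SimpleGraph.Walk.cons ((bdc_adj' G y x).mpr hxy.symm)
          (SimpleGraph.Walk.cons ((bdc_adj G x v).mpr hxv) SimpleGraph.Walk.nil))
    have hle : (_root_.bipartiteDoubleCover G).dist (Sum.inl u) (Sum.inr v) ≤ 3 :=
      SimpleGraph.dist_le p
    obtain ⟨q, hq⟩ := (SimpleGraph.Reachable.exists_walk_length_eq_dist ⟨p⟩)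
    have hpar := bdc_parity G q
    rw [hq] at hpar
    simp only [Sum.isLeft_inl, Sum.isLeft_inr] at hpar
    have hodd : (_root_.bipartiteDoubleCover G).dist (Sum.inl u) (Sum.inr v) % 2 ≠ 0 := by
      simp [hpar]
    have h1 : (_root_.bipartiteDoubleCover G).dist (Sum.inl u) (Sum.inr v) ≠ 1 := by
      rw [ne_eq, SimpleGraph.dist_eq_one_iff_adj, bdc_adj]
      exact h
    omega

lemma dist_same (hconn : G.Connected) (hdiam : G.diam = 2)
    (hcn : ∀ u v : V, G.Adj u v → ∃ x : V, G.Adj u x ∧ G.Adj v x)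
    (u v : V) [Decidable (u = v)] :
    (_root_.bipartiteDoubleCover G).dist (Sum.inl u) (Sum.inl v) =
      if u = v then 0 else 2 := by
  by_cases h : u = v
  · simp [h]
  · simp only [h, if_false]
    obtain ⟨x, hux, hxv⟩ := step2 G hconn hdiam hcn h
    let p : (_root_.bipartiteDoubleCover G).Walk (Sum.inl u) (Sum.inl v) :=
      SimpleGraph.Walk.cons ((bdc_adj G u x).mpr hux)
        (SimpleGraph.Walk.cons ((bdc_adj' G x v).mpr hxv) SimpleGraph.Walk.nil)
    have hle : (_root_.bipartiteDoubleCover G).dist (Sum.inl u) (Sum.inl v) ≤ 2 :=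
      SimpleGraph.dist_le p
    obtain ⟨q, hq⟩ := (SimpleGraph.Reachable.exists_walk_length_eq_dist ⟨p⟩)
    have hpar := bdc_parity G q
    rw [hq] at hpar
    simp only [Sum.isLeft_inl] at hpar
    have heven : (_root_.bipartiteDoubleCover G).dist (Sum.inl u) (Sum.inl v) % 2 = 0 := by
      simp [hpar]
    have h0 : (_root_.bipartiteDoubleCover G).dist (Sum.inl u) (Sum.inl v) ≠ 0 := by
      rw [ne_eq, SimpleGraph.Reachable.dist_eq_zero_iff ⟨p⟩]
      simp [h]
    omega

end Dist

section Dist2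
variable {V : Type*} [Fintype V] (G : SimpleGraph V) [DecidableRel G.Adj]

lemma dist_same' (hconn : G.Connected) (hdiam : G.diam = 2)
    (hcn : ∀ u v : V, G.Adj u v → ∃ x : V, G.Adj u x ∧ G.Adj v x)
    (u v : V) [Decidable (u = v)] :
    (_root_.bipartiteDoubleCover G).dist (Sum.inr u) (Sum.inr v) =
      if u = v then 0 else 2 := by
  by_cases h : u = v
  · simp [h]
  · simp only [h, if_false]
    obtain ⟨x, hux, hxv⟩ := step2 G hconn hdiam hcn h
    let p : (_root_.bipartiteDoubleCover G).Walk (Sum.inr u) (Sum.inr v) :=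
      SimpleGraph.Walk.cons ((bdc_adj' G u x).mpr hux)
        (SimpleGraph.Walk.cons ((bdc_adj G x v).mpr hxv) SimpleGraph.Walk.nil)
    have hle : (_root_.bipartiteDoubleCover G).dist (Sum.inr u) (Sum.inr v) ≤ 2 :=
      SimpleGraph.dist_le p
    obtain ⟨q, hq⟩ := (SimpleGraph.Reachable.exists_walk_length_eq_dist ⟨p⟩)
    have hpar := bdc_parity G q
    rw [hq] at hpar
    simp only [Sum.isLeft_inr] at hpar
    have heven : (_root_.bipartiteDoubleCover G).dist (Sum.inr u) (Sum.inr v) % 2 = 0 := by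
      simp [hpar]
    have h0 : (_root_.bipartiteDoubleCover G).dist (Sum.inr u) (Sum.inr v) ≠ 0 := by
      rw [ne_eq, SimpleGraph.Reachable.dist_eq_zero_iff ⟨p⟩]
      simp [h]
    omega

lemma dist_cross' (hconn : G.Connected) (hdiam : G.diam = 2) (k : ℕ) (hk : 3 ≤ k)
    (hreg : G.IsRegularOfDegree k)
    (hcn : ∀ u v : V, G.Adj u v → ∃ x : V, G.Adj u x ∧ G.Adj v x)
    (u v : V) :
    (_root_.bipartiteDoubleCover G).dist (Sum.inr u) (Sum.inl v) =
      if G.Adj u v then 1 else 3 := by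
  rw [SimpleGraph.dist_comm, dist_cross G hconn hdiam k hk hreg hcn v u]
  simp [G.adj_comm u v]

end Dist2


theorem stmt11 {V : Type*} [Fintype V] (G : SimpleGraph V)
    [DecidableRel G.Adj] (k : ℕ) (hk : 3 ≤ k)
    (hconn : G.Connected) (hreg : G.IsRegularOfDegree k) (hdiam : G.diam = 2)
    (hcn : ∀ u v : V, G.Adj u v → ∃ x : V, G.Adj u x ∧ G.Adj v x)
    (w : V → ℝ) (lam : ℝ) (hw : (G.adjMatrix ℝ).mulVec w = lam • w)
    (hsum : ∑ v : V, w v = 0) :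
    (distMatrix (_root_.bipartiteDoubleCover G)).mulVec (Sum.elim w w) =
      (-2 * lam - 2) • Sum.elim w w ∧
    (distMatrix (_root_.bipartiteDoubleCover G)).mulVec (Sum.elim w (-w)) =
      (2 * lam - 2) • Sum.elim w (-w) := by
  classical
  have hI : ∀ u : V, ∑ a : V, (if u = a then (0:ℝ) else 2) * w a = -2 * w u := by
    intro u
    have : ∀ a : V, (if u = a then (0:ℝ) else 2) * w a
        = 2 * w a - (if u = a then 2 * w a else 0) := by
      intro a; by_cases h : u = a <;> simp [h]
    rw [Finset.sum_congr rfl fun a _ => this a, Finset.sum_sub_distrib,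
      ← Finset.mul_sum, hsum, Finset.sum_ite_eq]
    simp
  have hA : ∀ u : V, ∑ a : V, (if G.Adj u a then (1:ℝ) else 3) * w a = -2 * lam * w u := by
    intro u
    have hwu : ∑ a ∈ G.neighborFinset u, w a = lam * w u := by
      have := congrFun hw u
      simpa using this
    have : ∀ a : V, (if G.Adj u a then (1:ℝ) else 3) * w a
        = 3 * w a - (if G.Adj u a then 2 * w a else 0) := by
      intro a; by_cases h : G.Adj u a <;> simp [h]; ring
    rw [Finset.sum_congr rfl fun a _ => this a, Finset.sum_sub_distrib,
      ← Finset.mul_sum, hsum, Finset.sum_ite, Finset.sum_const_zero,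
      ← Finset.mul_sum]
    have hfl : Finset.univ.filter (fun a => G.Adj u a) = G.neighborFinset u := by
      ext a; simp [SimpleGraph.mem_neighborFinset]
    rw [hfl, hwu]; ring
  have hDll : ∀ u a : V, distMatrix (_root_.bipartiteDoubleCover G) (Sum.inl u) (Sum.inl a)
      = if u = a then (0:ℝ) else 2 := by
    intro u a
    rw [distMatrix, Matrix.of_apply, dist_same G hconn hdiam hcn u a]
    by_cases h : u = a <;> simp [h]
  have hDrr : ∀ u a : V, distMatrix (_root_.bipartiteDoubleCover G) (Sum.inr u) (Sum.inr a)
      = if u = a then (0:ℝ) else 2 := by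
    intro u a
    rw [distMatrix, Matrix.of_apply, dist_same' G hconn hdiam hcn u a]
    by_cases h : u = a <;> simp [h]
  have hDlr : ∀ u a : V, distMatrix (_root_.bipartiteDoubleCover G) (Sum.inl u) (Sum.inr a)
      = if G.Adj u a then (1:ℝ) else 3 := by
    intro u a
    rw [distMatrix, Matrix.of_apply, dist_cross G hconn hdiam k hk hreg hcn u a]
    by_cases h : G.Adj u a <;> simp [h]
  have hDrl : ∀ u a : V, distMatrix (_root_.bipartiteDoubleCover G) (Sum.inr u) (Sum.inl a)
      = if G.Adj u a then (1:ℝ) else 3 := by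
    intro u a
    rw [distMatrix, Matrix.of_apply, dist_cross' G hconn hdiam k hk hreg hcn u a]
    by_cases h : G.Adj u a <;> simp [h]
  constructor <;> funext x <;> rcases x with u | u <;>
    simp only [Matrix.mulVec, dotProduct, Fintype.sum_sum_type,
      Sum.elim_inl, Sum.elim_inr, Pi.smul_apply, Pi.neg_apply, smul_eq_mul,
      hDll, hDrr, hDlr, hDrl]
  · rw [hI u, hA u]; ring
  · rw [hI u, hA u]; ring
  · have h1 : ∑ a : V, (if G.Adj u a then (1:ℝ) else 3) * (-(w a))
        = -(-2 * lam * w u) := by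
      rw [← hA u, ← Finset.sum_neg_distrib]
      refine Finset.sum_congr rfl fun a _ => ?_
      by_cases h : G.Adj u a <;> simp [h] <;> ring
    rw [hI u, h1]; ring
  · have h1 : ∑ a : V, (if u = a then (0:ℝ) else 2) * (-(w a)) = -(-2 * w u) := by
      rw [← hI u, ← Finset.sum_neg_distrib]
      refine Finset.sum_congr rfl fun a _ => ?_
      by_cases h : u = a <;> simp [h]
    rw [hA u, h1]; ring
end

section
/- Let G be a connected, non-complete strongly regular graph with parameters (n,d,a,c), where d ≥ 3, a ≠ 0, and c > 0, and let D be the distance matrix of the bipartite double cover B(G). Set Δ = (a-c)² + 4(d-c), λ₁ = ((a-c) + √Δ)/2 and λ₂ = ((a-c) - √Δ)/2. Then every real eigenvalue μ of D (i.e., every μ ∈ ℝ for which there exists a nonzero real vector u with D·u = μ·u) belongs to the set {-2d + 5n - 2, 2λ₁ - 2, 2λ₂ - 2, -2λ₂ - 2, -2λ₁ - 2, 2d - n - 2}. -/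
open SimpleGraph

open Finset

section Aux

variable {V : Type*} {G : SimpleGraph V}

lemma bdc_adj_lr {u v : V} : (_root_.bipartiteDoubleCover G).Adj (.inl u) (.inr v) ↔ G.Adj u v := Iff.rfl
lemma bdc_adj_rl {u v : V} : (_root_.bipartiteDoubleCover G).Adj (.inr u) (.inl v) ↔ G.Adj u v := Iff.rfl

lemma bdc_dist_ll {u v : V} (hne : u ≠ v)
    (w : V) (hw : w ∈ G.commonNeighbors u v) :
    (_root_.bipartiteDoubleCover G).dist (.inl u) (.inl v) = 2 := by
  rw [mem_commonNeighbors] at hw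
  let p : (_root_.bipartiteDoubleCover G).Walk (.inl u) (.inl v) :=
    .cons (bdc_adj_lr.mpr hw.1) (.cons (bdc_adj_rl.mpr hw.2.symm) .nil)
  have h2 : (_root_.bipartiteDoubleCover G).dist (.inl u) (.inl v) ≤ 2 := dist_le p
  have h0 : (_root_.bipartiteDoubleCover G).dist (.inl u) (.inl v) ≠ 0 := by
    rw [dist_ne_zero_iff_ne_and_reachable]
    exact ⟨by simp [hne], p.reachable⟩
  have h1 : (_root_.bipartiteDoubleCover G).dist (.inl u) (.inl v) ≠ 1 := by
    intro h
    exact (dist_eq_one_iff_adj.mp h).elim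
  omega

lemma bdc_dist_rr {u v : V} (hne : u ≠ v)
    (w : V) (hw : w ∈ G.commonNeighbors u v) :
    (_root_.bipartiteDoubleCover G).dist (.inr u) (.inr v) = 2 := by
  rw [mem_commonNeighbors] at hw
  let p : (_root_.bipartiteDoubleCover G).Walk (.inr u) (.inr v) :=
    .cons (bdc_adj_rl.mpr hw.1) (.cons (bdc_adj_lr.mpr hw.2.symm) .nil)
  have h2 : (_root_.bipartiteDoubleCover G).dist (.inr u) (.inr v) ≤ 2 := dist_le p
  have h0 : (_root_.bipartiteDoubleCover G).dist (.inr u) (.inr v) ≠ 0 := by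
    rw [dist_ne_zero_iff_ne_and_reachable]
    exact ⟨by simp [hne], p.reachable⟩
  have h1 : (_root_.bipartiteDoubleCover G).dist (.inr u) (.inr v) ≠ 1 := by
    intro h
    exact (dist_eq_one_iff_adj.mp h).elim
  omega

lemma bdc_dist_lr_adj {u v : V} (h : G.Adj u v) :
    (_root_.bipartiteDoubleCover G).dist (.inl u) (.inr v) = 1 :=
  dist_eq_one_iff_adj.mpr (bdc_adj_lr.mpr h)

lemma bdc_dist_lr_not_adj {u v : V} (h : ¬ G.Adj u v)
    (w t : V) (hw : G.Adj u w) (ht : t ∈ G.commonNeighbors w v) :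
    (_root_.bipartiteDoubleCover G).dist (.inl u) (.inr v) = 3 := by
  rw [mem_commonNeighbors] at ht
  let p : (_root_.bipartiteDoubleCover G).Walk (.inl u) (.inr v) :=
    .cons (bdc_adj_lr.mpr hw) (.cons (bdc_adj_rl.mpr ht.1)
      (.cons (bdc_adj_lr.mpr ht.2.symm) .nil))
  have h3 : (_root_.bipartiteDoubleCover G).dist (.inl u) (.inr v) ≤ 3 := dist_le p
  have hge : 3 ≤ (_root_.bipartiteDoubleCover G).dist (.inl u) (.inr v) := by
    by_contra hlt
    push_neg at hlt
    obtain ⟨q, hq⟩ := p.reachable.exists_walk_length_eq_dist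
    rw [← hq] at hlt
    clear hq h3 p
    cases q with
    | cons h1 q1 =>
      rename_i b
      cases b with
      | inl x => exact h1.elim
      | inr x =>
        cases q1 with
        | nil => exact h (bdc_adj_lr.mp h1)
        | cons h2 q2 =>
          rename_i b2
          cases b2 with
          | inr y => exact h2.elim
          | inl y =>
            cases q2 with
            | cons h3 q3 => simp [SimpleGraph.Walk.length_cons] at hlt; omega
  omega

end Aux

section Alg

variable {V : Type*} [Fintype V] [DecidableEq V] (G : SimpleGraph V) [DecidableRel G.Adj]

set_option linter.unusedSectionVars false

lemma sum_delta_two (w : V) (g : V → ℝ) :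
    ∑ a, (if w = a then (0:ℝ) else 2) * g a = 2*(∑ a, g a) - 2*g w := by
  have h : ∀ a ∈ univ, (if w = a then (0:ℝ) else 2) * g a
      = 2*g a - (if w = a then 2*g a else 0) := fun a _ => by split <;> ring
  rw [Finset.sum_congr rfl h, Finset.sum_sub_distrib, Finset.sum_ite_eq, Finset.mul_sum]
  simp

lemma sum_adj_three (w : V) (g : V → ℝ) :
    ∑ a, (if G.Adj w a then (1:ℝ) else 3) * g a
      = 3*(∑ a, g a) - 2*((G.adjMatrix ℝ).mulVec g w) := by
  have hA : (G.adjMatrix ℝ).mulVec g w = ∑ a, (if G.Adj w a then (1:ℝ) else 0) * g a := by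
    simp [Matrix.mulVec, dotProduct, adjMatrix_apply]
  rw [hA, Finset.mul_sum, Finset.mul_sum, ← Finset.sum_sub_distrib]
  refine Finset.sum_congr rfl fun a _ => by split <;> ring

lemma sum_mulVec_regular {d : ℕ} (hreg : G.IsRegularOfDegree d) (g : V → ℝ) :
    ∑ w, (G.adjMatrix ℝ).mulVec g w = d * ∑ a, g a := by
  simp only [Matrix.mulVec, dotProduct, adjMatrix_apply]
  rw [Finset.sum_comm, Finset.mul_sum]
  refine Finset.sum_congr rfl fun a _ => ?_
  rw [← Finset.sum_mul]
  congr 1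
  have h1 : (univ.filter (fun w => G.Adj w a)) = G.neighborFinset a := by
    ext w; simp [adj_comm]
  rw [Finset.sum_boole, h1]
  have h2 : (G.neighborFinset a).card = d := hreg a
  rw [h2]

lemma compl_mulVec (v : V → ℝ) (w : V) :
    (Gᶜ.adjMatrix ℝ).mulVec v w = (∑ x, v x) - v w - (G.adjMatrix ℝ).mulVec v w := by
  simp only [Matrix.mulVec, dotProduct, adjMatrix_apply, compl_adj]
  have hw : v w = ∑ x, if w = x then v x else 0 := by rw [Finset.sum_ite_eq]; simp
  rw [hw, ← Finset.sum_sub_distrib, ← Finset.sum_sub_distrib]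
  refine Finset.sum_congr rfl fun x _ => ?_
  by_cases h1 : w = x
  · subst h1; simp [G.irrefl]
  · by_cases h2 : G.Adj w x <;> simp [h1, h2]

lemma nu_quad {n d a c : ℕ} (hsrg : G.IsSRGWith n d a c) (v : V → ℝ) (hv : v ≠ 0)
    (hsum : ∑ w, v w = 0) (ν : ℝ) (hA : (G.adjMatrix ℝ).mulVec v = ν • v) :
    ν ^ 2 = ((a : ℝ) - c) * ν + ((d : ℝ) - c) := by
  obtain ⟨w₀, hw₀⟩ := Function.ne_iff.mp hv
  simp only [Pi.zero_apply] at hw₀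
  have hme := hsrg.matrix_eq (α := ℝ)
  have key := congrFun (congrArg (fun M => Matrix.mulVec M v) hme) w₀
  simp only [pow_two] at key
  rw [← Matrix.mulVec_mulVec, hA, Matrix.mulVec_smul, hA] at key
  have hns : ∀ (k : ℕ) (M : Matrix V V ℝ), k • M = (k : ℝ) • M := by
    intro k M; rw [Nat.cast_smul_eq_nsmul]
  rw [hns, hns, hns, Matrix.add_mulVec, Matrix.add_mulVec, Matrix.smul_mulVec,
    Matrix.smul_mulVec, Matrix.smul_mulVec, Matrix.one_mulVec, hA] at key
  simp only [Pi.add_apply, Pi.smul_apply, smul_eq_mul] at key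
  rw [compl_mulVec, hsum, hA] at key
  simp only [Pi.smul_apply, smul_eq_mul] at key
  apply mul_right_cancel₀ hw₀
  linear_combination key

end Alg

open Polynomial

theorem stmt16 {V : Type*} [Fintype V] [DecidableEq V] (G : SimpleGraph V)
    [DecidableRel G.Adj] (n d a c : ℕ)
    (hd : 3 ≤ d) (ha : a ≠ 0) (hc : 0 < c)
    (hconn : G.Connected) (hnc : G ≠ ⊤) (hsrg : G.IsSRGWith n d a c)
    (Δ lam₁ lam₂ : ℝ)
    (hΔ : Δ = ((a : ℝ) - c) ^ 2 + 4 * ((d : ℝ) - c))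
    (hlam₁ : lam₁ = (((a : ℝ) - c) + Real.sqrt Δ) / 2)
    (hlam₂ : lam₂ = (((a : ℝ) - c) - Real.sqrt Δ) / 2)
    (μ : ℝ) (hμ : ∃ u : V ⊕ V → ℝ, u ≠ 0 ∧
      (distMatrix (_root_.bipartiteDoubleCover G)).mulVec u = μ • u) :
    μ ∈ ({-2 * (d : ℝ) + 5 * n - 2, 2 * lam₁ - 2, 2 * lam₂ - 2,
      -2 * lam₂ - 2, -2 * lam₁ - 2, 2 * (d : ℝ) - n - 2} : Set ℝ) := by
  classical
  obtain ⟨f, hf0, hmv⟩ := hμ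
  -- basic structural facts
  have htri : ∀ u w : V, G.Adj u w → (G.commonNeighbors u w).Nonempty := by
    intro u w h
    have := hsrg.of_adj u w h
    have hpos : 0 < Fintype.card (G.commonNeighbors u w) := by
      rw [this]; exact Nat.pos_of_ne_zero ha
    obtain ⟨⟨t, ht⟩⟩ := Fintype.card_pos_iff.mp hpos
    exact ⟨t, ht⟩
  have hcom : ∀ u w : V, u ≠ w → ¬ G.Adj u w → (G.commonNeighbors u w).Nonempty := by
    intro u w hne h
    have := hsrg.of_not_adj hne h
    have hpos : 0 < Fintype.card (G.commonNeighbors u w) := by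
      rw [this]; exact hc
    obtain ⟨⟨t, ht⟩⟩ := Fintype.card_pos_iff.mp hpos
    exact ⟨t, ht⟩
  have hnbr : ∀ u : V, ∃ w, G.Adj u w := by
    intro u
    have hdeg : G.degree u = d := hsrg.regular u
    have : 0 < G.degree u := by omega
    obtain ⟨w, hw⟩ := Finset.card_pos.mp this
    exact ⟨w, (G.mem_neighborFinset u w).mp hw⟩
  -- c ≤ d, hence Δ ≥ 0
  have hdc : c ≤ d := by
    have hex : ∃ u w : V, u ≠ w ∧ ¬ G.Adj u w := by
      by_contra hcon
      push_neg at hcon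
      exact hnc (by
        ext u w
        simp only [top_adj]
        exact ⟨fun h => G.ne_of_adj h, fun h => hcon u w h⟩)
    obtain ⟨u, w, hne, hnadj⟩ := hex
    have h1 := hsrg.of_not_adj hne hnadj
    have h2 := G.card_commonNeighbors_le_degree_left u w
    rw [h1, hsrg.regular u] at h2
    exact h2
  have hΔ0 : 0 ≤ Δ := by
    rw [hΔ]
    have : (c:ℝ) ≤ d := Nat.cast_le.mpr hdc
    nlinarith [sq_nonneg ((a:ℝ) - c)]
  have hsq : Real.sqrt Δ ^ 2 = Δ := Real.sq_sqrt hΔ0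
  -- quadratic root dichotomy
  have hroot : ∀ ν : ℝ, ν ^ 2 = ((a : ℝ) - c) * ν + ((d : ℝ) - c) → ν = lam₁ ∨ ν = lam₂ := by
    intro ν h
    have hz : (ν - lam₁) * (ν - lam₂) = 0 := by
      rw [hlam₁, hlam₂]
      have hsq' : Real.sqrt Δ ^ 2 = ((a : ℝ) - c) ^ 2 + 4 * ((d : ℝ) - c) := by
        rw [hsq, hΔ]
      linear_combination h - hsq' / 4
    rcases mul_eq_zero.mp hz with h' | h'
    · exact Or.inl (by linarith [sub_eq_zero.mp h'])
    · exact Or.inr (by linarith [sub_eq_zero.mp h'])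
  -- distance matrix entries
  have hDll : ∀ w v : V, distMatrix (_root_.bipartiteDoubleCover G) (.inl w) (.inl v)
      = if w = v then 0 else 2 := by
    intro w v
    by_cases h : w = v
    · subst h; simp [distMatrix]
    · simp only [distMatrix, Matrix.of_apply, h, if_false]
      have : (_root_.bipartiteDoubleCover G).dist (.inl w) (.inl v) = 2 := by
        by_cases hadj : G.Adj w v
        · obtain ⟨t, ht⟩ := htri w v hadj
          exact bdc_dist_ll h t ht
        · obtain ⟨t, ht⟩ := hcom w v h hadj
          exact bdc_dist_ll h t ht
      rw [this]; norm_num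
  have hDrr : ∀ w v : V, distMatrix (_root_.bipartiteDoubleCover G) (.inr w) (.inr v)
      = if w = v then 0 else 2 := by
    intro w v
    by_cases h : w = v
    · subst h; simp [distMatrix]
    · simp only [distMatrix, Matrix.of_apply, h, if_false]
      have : (_root_.bipartiteDoubleCover G).dist (.inr w) (.inr v) = 2 := by
        by_cases hadj : G.Adj w v
        · obtain ⟨t, ht⟩ := htri w v hadj
          exact bdc_dist_rr h t ht
        · obtain ⟨t, ht⟩ := hcom w v h hadj
          exact bdc_dist_rr h t ht
      rw [this]; norm_num
  have hdist_lr : ∀ w v : V, (_root_.bipartiteDoubleCover G).dist (.inl w) (.inr v)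
      = if G.Adj w v then 1 else 3 := by
    intro w v
    by_cases hadj : G.Adj w v
    · rw [if_pos hadj]; exact bdc_dist_lr_adj hadj
    · rw [if_neg hadj]
      by_cases h : w = v
      · subst h
        obtain ⟨t, ht⟩ := hnbr w
        obtain ⟨s, hs⟩ := htri w t ht
        rw [mem_commonNeighbors] at hs
        exact bdc_dist_lr_not_adj hadj t s ht ((mem_commonNeighbors G).mpr ⟨hs.2, hs.1⟩)
      · obtain ⟨t, ht⟩ := hcom w v h hadj
        rw [mem_commonNeighbors] at ht
        obtain ⟨s, hs⟩ := htri t v ht.2.symm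
        exact bdc_dist_lr_not_adj hadj t s ht.1 hs
  have hDlr : ∀ w v : V, distMatrix (_root_.bipartiteDoubleCover G) (.inl w) (.inr v)
      = if G.Adj w v then 1 else 3 := by
    intro w v
    simp only [distMatrix, Matrix.of_apply, hdist_lr w v]
    split <;> norm_num
  have hDrl : ∀ w v : V, distMatrix (_root_.bipartiteDoubleCover G) (.inr w) (.inl v)
      = if G.Adj w v then 1 else 3 := by
    intro w v
    simp only [distMatrix, Matrix.of_apply]
    rw [SimpleGraph.dist_comm, hdist_lr v w]
    have hiff : G.Adj v w ↔ G.Adj w v := ⟨fun h => h.symm, fun h => h.symm⟩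
    simp only [hiff]
    split <;> norm_num
  -- eigenvector components
  set x : V → ℝ := fun w => f (.inl w) with hx
  set y : V → ℝ := fun w => f (.inr w) with hy
  set A : Matrix V V ℝ := G.adjMatrix ℝ with hA
  set Sx : ℝ := ∑ w, x w with hSx
  set Sy : ℝ := ∑ w, y w with hSy
  have E1 : ∀ w, 2*Sx - 2*x w + (3*Sy - 2*(A.mulVec y w)) = μ * x w := by
    intro w
    have h := congrFun hmv (Sum.inl w)
    simp only [Matrix.mulVec, dotProduct, Pi.smul_apply, smul_eq_mul] at h
    rw [Fintype.sum_sum_type] at h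
    have h1 : ∑ v, distMatrix (_root_.bipartiteDoubleCover G) (.inl w) (.inl v) * f (.inl v)
        = 2*Sx - 2*x w := by
      rw [Finset.sum_congr rfl (fun v _ => by rw [hDll w v])]
      exact sum_delta_two w x
    have h2 : ∑ v, distMatrix (_root_.bipartiteDoubleCover G) (.inl w) (.inr v) * f (.inr v)
        = 3*Sy - 2*(A.mulVec y w) := by
      rw [Finset.sum_congr rfl (fun v _ => by rw [hDlr w v])]
      exact sum_adj_three G w y
    rw [h1, h2] at h
    exact h
  have E2 : ∀ w, 3*Sx - 2*(A.mulVec x w) + (2*Sy - 2*y w) = μ * y w := by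
    intro w
    have h := congrFun hmv (Sum.inr w)
    simp only [Matrix.mulVec, dotProduct, Pi.smul_apply, smul_eq_mul] at h
    rw [Fintype.sum_sum_type] at h
    have h1 : ∑ v, distMatrix (_root_.bipartiteDoubleCover G) (.inr w) (.inl v) * f (.inl v)
        = 3*Sx - 2*(A.mulVec x w) := by
      rw [Finset.sum_congr rfl (fun v _ => by rw [hDrl w v])]
      exact sum_adj_three G w x
    have h2 : ∑ v, distMatrix (_root_.bipartiteDoubleCover G) (.inr w) (.inr v) * f (.inr v)
        = 2*Sy - 2*y w := by
      rw [Finset.sum_congr rfl (fun v _ => by rw [hDrr w v])]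
      exact sum_delta_two w y
    rw [h1, h2] at h
    exact h
  have hcard : (Fintype.card V : ℝ) = n := by exact_mod_cast congrArg Nat.cast hsrg.card
  simp only [Set.mem_insert_iff, Set.mem_singleton_iff]
  by_cases hz : (fun w => x w + y w) ≠ 0
  · -- symmetric part
    set z : V → ℝ := fun w => x w + y w with hzdef
    have hAz : ∀ w, A.mulVec z w = A.mulVec x w + A.mulVec y w := by
      intro w
      have hzxy : z = x + y := rfl
      rw [hzxy, Matrix.mulVec_add]
      rfl
    have Ep : ∀ w, 5*(Sx+Sy) - 2*z w - 2*(A.mulVec z w) = μ * z w := by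
      intro w
      have e1 := E1 w
      have e2 := E2 w
      have e3 := hAz w
      simp only [hzdef]
      rw [e3]
      ring_nf
      ring_nf at e1 e2
      linarith
    have hSz : ∑ w, z w = Sx + Sy := by
      simp only [hzdef]
      rw [Finset.sum_add_distrib]
    have hsum1 : ∑ w : V, (2 * z w) = 2 * (Sx + Sy) := by rw [← Finset.mul_sum, hSz]
    have hsum2 : ∑ w : V, (2 * A.mulVec z w) = 2 * ((d:ℝ) * (Sx+Sy)) := by
      rw [← Finset.mul_sum, hA, sum_mulVec_regular G hsrg.regular z, hSz]
    have hsum3 : ∑ w : V, μ * z w = μ * (Sx+Sy) := by rw [← Finset.mul_sum, hSz]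
    have hsumEp : (5 * (n:ℝ) - 2 - 2*d - μ) * (Sx + Sy) = 0 := by
      have h1 : ∑ w, (5*(Sx+Sy) - 2*z w - 2*(A.mulVec z w)) = ∑ w, μ * z w :=
        Finset.sum_congr rfl fun w _ => Ep w
      rw [Finset.sum_sub_distrib, Finset.sum_sub_distrib, Finset.sum_const, hsum1, hsum2,
        hsum3, card_univ, nsmul_eq_mul, hcard] at h1
      linear_combination h1
    by_cases ht : Sx + Sy = 0
    · have hAeig : A.mulVec z = (-(μ+2)/2) • z := by
        funext w
        have h2 := Ep w
        rw [ht] at h2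
        simp only [Pi.smul_apply, smul_eq_mul]
        linear_combination (-1/2 : ℝ) * h2
      have hq := nu_quad G hsrg z hz (by rw [hSz, ht]) _ hAeig
      rcases hroot _ hq with h' | h'
      · right; right; right; right; left
        linarith
      · right; right; right; left
        linarith
    · left
      rcases mul_eq_zero.mp hsumEp with h' | h'
      · linarith
      · exact absurd h' ht
  · -- antisymmetric part
    push_neg at hz
    set z : V → ℝ := fun w => x w - y w with hzdef
    have hzne : z ≠ 0 := by
      intro h0
      apply hf0
      funext v
      cases v with
      | inl w =>
        have h1 := congrFun hz w
        have h2 := congrFun h0 w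
        simp only [hzdef, Pi.zero_apply] at h1 h2
        show x w = 0
        linarith
      | inr w =>
        have h1 := congrFun hz w
        have h2 := congrFun h0 w
        simp only [hzdef, Pi.zero_apply] at h1 h2
        show y w = 0
        linarith
    have hAz : ∀ w, A.mulVec z w = A.mulVec x w - A.mulVec y w := by
      intro w
      have hzxy : z = x - y := rfl
      rw [hzxy, Matrix.mulVec_sub]
      rfl
    have Em : ∀ w, -(Sx - Sy) - 2*z w + 2*(A.mulVec z w) = μ * z w := by
      intro w
      have e1 := E1 w
      have e2 := E2 w
      have e3 := hAz w
      simp only [hzdef]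
      rw [e3]
      ring_nf
      ring_nf at e1 e2
      linarith
    have hSz : ∑ w, z w = Sx - Sy := by
      simp only [hzdef]
      rw [Finset.sum_sub_distrib]
    have hsum1 : ∑ w : V, (2 * z w) = 2 * (Sx - Sy) := by rw [← Finset.mul_sum, hSz]
    have hsum2 : ∑ w : V, (2 * A.mulVec z w) = 2 * ((d:ℝ) * (Sx-Sy)) := by
      rw [← Finset.mul_sum, hA, sum_mulVec_regular G hsrg.regular z, hSz]
    have hsum3 : ∑ w : V, μ * z w = μ * (Sx-Sy) := by rw [← Finset.mul_sum, hSz]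
    have hsumEm : (-(n:ℝ) - 2 + 2*d - μ) * (Sx - Sy) = 0 := by
      have h1 : ∑ w, (-(Sx-Sy) - 2*z w + 2*(A.mulVec z w)) = ∑ w, μ * z w :=
        Finset.sum_congr rfl fun w _ => Em w
      rw [Finset.sum_add_distrib, Finset.sum_sub_distrib, Finset.sum_const, hsum1, hsum2,
        hsum3, card_univ, nsmul_eq_mul, hcard] at h1
      linear_combination h1
    by_cases ht : Sx - Sy = 0
    · have hAeig : A.mulVec z = ((μ+2)/2) • z := by
        funext w
        have h2 := Em w
        rw [ht] at h2
        simp only [Pi.smul_apply, smul_eq_mul]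
        linear_combination (1/2 : ℝ) * h2
      have hq := nu_quad G hsrg z hzne (by rw [hSz, ht]) _ hAeig
      rcases hroot _ hq with h' | h'
      · right; left
        linarith
      · right; right; left
        linarith
    · right; right; right; right; right
      rcases mul_eq_zero.mp hsumEm with h' | h'
      · linarith
      · exact absurd h' ht
end
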